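/- arXiv:1503.04544 — 2 statements merged into one kernel-verified Lean document; each statement's English description precedes it below -/
import Mathlib

section
/- The explicit cut-cell scheme conserves total mass: if f^{n+1} is given by the explicit finite-volume update in which interior fluxes across shared Cartesian edges appear with opposite signs in the two adjacent cells, the boundary flux with diffuse reflection sums to zero over velocities, and the BGK collision term has zero velocity sum, then Σ_{i,j} A^{n+1}_{i,j} Σ_p f^{n+1}_{i,j,p} Δv = Σ_{i,j} A^n_{i,j} Σ_p f^n_{i,j,p} Δv. -/
open Finset

/-- Mass conservation of the explicit cut-cell scheme: interior fluxes cancel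
pairwise, wall fluxes sum to zero over velocities (diffuse reflection), and
the BGK collision term has zero velocity sum, hence the total mass is
conserved. Cells are indexed by `ι`, interior edges by `Eint` (each shared by
a "left" cell `L e` and a "right" cell `R e`), wall edges by `Ew` (owned by
`W e`), and discrete velocities by `Fin N`. -/
theorem cutcell_scheme_mass_conservation
    {ι Eint Ew : Type*} [Fintype ι] [DecidableEq ι] [Fintype Eint] [Fintype Ew]
    (N : ℕ) (Δv Δt : ℝ) (hΔv : 0 < Δv) (hΔt : 0 < Δt)
    (A A' : ι → ℝ) (hA : ∀ i, 0 < A i) (hA' : ∀ i, 0 < A' i)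
    (τ : ι → ℝ) (hτ : ∀ i, 0 < τ i)
    (f f' feq : ι → Fin N → ℝ)
    (L R : Eint → ι) (W : Ew → ι)
    (Φ : Eint → Fin N → ℝ)   -- interior flux, counted + for L e and - for R e
    (Ψ : Ew → Fin N → ℝ)     -- wall flux
    (hwall : ∀ e : Ew, ∑ p, Ψ e p * Δv = 0)
    (hcoll : ∀ i : ι, ∑ p, (feq i p - f i p) * Δv = 0)
    (hscheme : ∀ i p,
      A' i * f' i p = A i * f i p
        - Δt * ((∑ e ∈ univ.filter (fun e => L e = i), Φ e p)
                - (∑ e ∈ univ.filter (fun e => R e = i), Φ e p)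
                + (∑ e ∈ univ.filter (fun e => W e = i), Ψ e p))
        + Δt * (A i / τ i) * (feq i p - f i p)) :
    ∑ i, A' i * ∑ p, f' i p * Δv = ∑ i, A i * ∑ p, f i p * Δv := by

  have fib : ∀ (g : Eint → ι) (F : Eint → Fin N → ℝ),
      (∑ i, ∑ p, (∑ e ∈ univ.filter (fun e => g e = i), F e p) * Δv)
        = ∑ p, ∑ e, F e p * Δv := by
    intro g F
    rw [Finset.sum_comm]
    refine Finset.sum_congr rfl fun p _ => ?_
    rw [← Finset.sum_fiberwise (univ : Finset Eint) g (fun e => F e p * Δv)]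
    exact Finset.sum_congr rfl fun i _ => Finset.sum_mul _ _ _
  have hwallsum : (∑ i, ∑ p, (∑ e ∈ univ.filter (fun e => W e = i), Ψ e p) * Δv) = 0 := by
    rw [Finset.sum_comm]
    have : ∀ p : Fin N, (∑ i, (∑ e ∈ univ.filter (fun e => W e = i), Ψ e p) * Δv)
        = ∑ e, Ψ e p * Δv := by
      intro p
      rw [← Finset.sum_fiberwise (univ : Finset Ew) W (fun e => Ψ e p * Δv)]
      exact Finset.sum_congr rfl fun i _ => Finset.sum_mul _ _ _
    calc (∑ p, ∑ i, (∑ e ∈ univ.filter (fun e => W e = i), Ψ e p) * Δv)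
        = ∑ p, ∑ e, Ψ e p * Δv := Finset.sum_congr rfl fun p _ => this p
      _ = ∑ e, ∑ p, Ψ e p * Δv := Finset.sum_comm
      _ = 0 := by simp [hwall]
  have step : (∑ i, A' i * ∑ p, f' i p * Δv)
      = (∑ i, A i * ∑ p, f i p * Δv)
        - Δt * ((∑ i, ∑ p, (∑ e ∈ univ.filter (fun e => L e = i), Φ e p) * Δv)
              - (∑ i, ∑ p, (∑ e ∈ univ.filter (fun e => R e = i), Φ e p) * Δv)
              + (∑ i, ∑ p, (∑ e ∈ univ.filter (fun e => W e = i), Ψ e p) * Δv))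
        + Δt * ∑ i, (A i / τ i) * ∑ p, (feq i p - f i p) * Δv := by
    have h1 : ∀ i, A' i * ∑ p, f' i p * Δv
        = A i * (∑ p, f i p * Δv)
          - Δt * ((∑ p, (∑ e ∈ univ.filter (fun e => L e = i), Φ e p) * Δv)
                - (∑ p, (∑ e ∈ univ.filter (fun e => R e = i), Φ e p) * Δv)
                + (∑ p, (∑ e ∈ univ.filter (fun e => W e = i), Ψ e p) * Δv))
          + Δt * ((A i / τ i) * ∑ p, (feq i p - f i p) * Δv) := by
      intro i
      simp only [Finset.mul_sum, ← Finset.sum_sub_distrib, ← Finset.sum_add_distrib]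
      refine Finset.sum_congr rfl fun p _ => ?_
      have h := hscheme i p
      nlinarith [h]
    simp only [h1, Finset.sum_add_distrib, Finset.sum_sub_distrib, Finset.mul_sum]
    congr 2
    rw [← Finset.mul_sum, Finset.sum_add_distrib, Finset.sum_sub_distrib]
  rw [step, hwallsum, fib L Φ, fib R Φ]
  have hc : (∑ i, (A i / τ i) * ∑ p, (feq i p - f i p) * Δv) = 0 := by
    simp [hcoll]
  rw [hc]
  ring
end

section
/- The explicit upwind BGK scheme preserves positivity under the CFL condition: if f^n_{i,j,p} ≥ 0 for all cells and velocities, f^eq ≥ 0, boundary values f_w ≥ 0, and Δt·(max 1/τ + max_p φ_{i,j,p}/A^n_{i,j}) ≤ 1 where φ_{i,j,p} = Σ (|L^+_x| v_{p,1}^+ - |L^-_x| v_{p,1}^- + |L^+_y| v_{p,2}^+ - |L^-_y| v_{p,2}^- + |L_w| ((v_p - u_w)·n_w)^+), then the updated values f^{n+1,*}_{i,j,p} given by the explicit scheme (with A^{n+1,*} > 0) are nonnegative. -/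
open Finset

/-- Positivity of the explicit upwind BGK cut-cell scheme under the CFL
condition.  For each discrete velocity `p`, `v₁ p`, `v₂ p` are its components
and `c p = (v_p - u_w)·n_w` its relative normal component on the wall edge.
`fE, fW, fN, fS` are the neighboring values and `fw` the diffuse-reflection
boundary value. -/
theorem cutcell_scheme_positivity
    (N : ℕ) (v₁ v₂ c : Fin N → ℝ)
    (Lxp Lxm Lyp Lym Lw : ℝ)
    (hLxp : 0 ≤ Lxp) (hLxm : 0 ≤ Lxm) (hLyp : 0 ≤ Lyp) (hLym : 0 ≤ Lym)
    (hLw : 0 ≤ Lw)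
    (A A' τ Δt : ℝ) (hA : 0 < A) (hA' : 0 < A') (hτ : 0 < τ) (hΔt : 0 ≤ Δt)
    (f fE fW' fN fS fw feq : Fin N → ℝ)
    (hf : ∀ p, 0 ≤ f p) (hfE : ∀ p, 0 ≤ fE p) (hfW : ∀ p, 0 ≤ fW' p)
    (hfN : ∀ p, 0 ≤ fN p) (hfS : ∀ p, 0 ≤ fS p)
    (hfw : ∀ p, 0 ≤ fw p) (hfeq : ∀ p, 0 ≤ feq p)
    (φ : Fin N → ℝ)
    (hφ : ∀ p, φ p = Lxp * max (v₁ p) 0 - Lxm * min (v₁ p) 0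
                   + Lyp * max (v₂ p) 0 - Lym * min (v₂ p) 0
                   + Lw * max (c p) 0)
    (hCFL : ∀ p, Δt * (1 / τ + φ p / A) ≤ 1)
    (f' : Fin N → ℝ)
    (hscheme : ∀ p, A' * f' p = A * f p
      - Δt * ( (Lxp * (min (v₁ p) 0 * fE p + max (v₁ p) 0 * f p)
                - Lxm * (min (v₁ p) 0 * f p + max (v₁ p) 0 * fW' p))
             + (Lyp * (min (v₂ p) 0 * fN p + max (v₂ p) 0 * f p)
                - Lym * (min (v₂ p) 0 * f p + max (v₂ p) 0 * fS p))
             + Lw * (min (c p) 0 * fw p + max (c p) 0 * f p) )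
      + Δt * (A / τ) * (feq p - f p)) :
    ∀ p, 0 ≤ f' p := by
  intro p
  have hmin1 : min (v₁ p) 0 ≤ 0 := min_le_right _ _
  have hmax1 : 0 ≤ max (v₁ p) 0 := le_max_right _ _
  have hmin2 : min (v₂ p) 0 ≤ 0 := min_le_right _ _
  have hmax2 : 0 ≤ max (v₂ p) 0 := le_max_right _ _
  have hminc : min (c p) 0 ≤ 0 := min_le_right _ _
  have hmaxc : 0 ≤ max (c p) 0 := le_max_right _ _
  have hcoef : 0 ≤ A - Δt * φ p - Δt * (A / τ) := by
    have h := hCFL p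
    have e : Δt * (A / τ) + Δt * φ p = A * (Δt * (1 / τ + φ p / A)) := by
      field_simp
    have h2 : A * (Δt * (1 / τ + φ p / A)) ≤ A * 1 :=
      mul_le_mul_of_nonneg_left h hA.le
    nlinarith
  have key : 0 ≤ A' * f' p := by
    rw [hscheme p]
    have hexp : A * f p
      - Δt * ( (Lxp * (min (v₁ p) 0 * fE p + max (v₁ p) 0 * f p)
                - Lxm * (min (v₁ p) 0 * f p + max (v₁ p) 0 * fW' p))
             + (Lyp * (min (v₂ p) 0 * fN p + max (v₂ p) 0 * f p)
                - Lym * (min (v₂ p) 0 * f p + max (v₂ p) 0 * fS p))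
             + Lw * (min (c p) 0 * fw p + max (c p) 0 * f p) )
      + Δt * (A / τ) * (feq p - f p)
      = (A - Δt * φ p - Δt * (A / τ)) * f p
        + Δt * (Lxp * (-(min (v₁ p) 0)) * fE p)
        + Δt * (Lxm * max (v₁ p) 0 * fW' p)
        + Δt * (Lyp * (-(min (v₂ p) 0)) * fN p)
        + Δt * (Lym * max (v₂ p) 0 * fS p)
        + Δt * (Lw * (-(min (c p) 0)) * fw p)
        + Δt * (A / τ) * feq p := by
      rw [hφ p]; ring
    rw [hexp]
    have h1 : 0 ≤ (A - Δt * φ p - Δt * (A / τ)) * f p :=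
      mul_nonneg hcoef (hf p)
    have h2 : 0 ≤ Δt * (Lxp * (-(min (v₁ p) 0)) * fE p) :=
      mul_nonneg hΔt (mul_nonneg (mul_nonneg hLxp (by linarith)) (hfE p))
    have h3 : 0 ≤ Δt * (Lxm * max (v₁ p) 0 * fW' p) :=
      mul_nonneg hΔt (mul_nonneg (mul_nonneg hLxm hmax1) (hfW p))
    have h4 : 0 ≤ Δt * (Lyp * (-(min (v₂ p) 0)) * fN p) :=
      mul_nonneg hΔt (mul_nonneg (mul_nonneg hLyp (by linarith)) (hfN p))
    have h5 : 0 ≤ Δt * (Lym * max (v₂ p) 0 * fS p) :=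
      mul_nonneg hΔt (mul_nonneg (mul_nonneg hLym hmax2) (hfS p))
    have h6 : 0 ≤ Δt * (Lw * (-(min (c p) 0)) * fw p) :=
      mul_nonneg hΔt (mul_nonneg (mul_nonneg hLw (by linarith)) (hfw p))
    have h7 : 0 ≤ Δt * (A / τ) * feq p :=
      mul_nonneg (mul_nonneg hΔt (div_nonneg hA.le hτ.le)) (hfeq p)
    linarith
  exact nonneg_of_mul_nonneg_right key hA'
end
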